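/- Let N ≥ 2 be an integer and let p, μ, m be real numbers with 1 < p < N, 0 ≤ μ < μ̄ := ((N−p)/p)^p and m > 0. Let f : ℝ → ℝ be continuous and satisfy (F0). Let u : (0,∞) → ℝ be a radial profile solution of the equation (hypothesis (S)) such that u(r) → 0 as r → ∞. Set δ₁ = (m/(2(p−1)))^{1/p}. Then there exist constants C > 0 and R > 0 such that u(r) ≤ C·e^{−δ₁·r} for all r ≥ R. -/

import Mathlib

open Filter Topology Set

/-!
Once `u` is small, (F0) makes `f(u)` negligible against `m u^{p-1}`, and `μ / r^p` is small too, so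
the flux `r^{N-1} |u'|^{p-2} u'` has derivative at least `(m/2) r^{N-1} u^{p-1} > 0`. The flux is
then increasing, and since `u > 0` tends to `0` this forces `u' < 0`. The Riccati variable
`ψ = (-u'/u)^{p-1}` then satisfies `ψ' ≤ (p-1) ψ^{p/(p-1)} - m/2`; as `ψ ≥ 0`, the right-hand
side can never become negative (otherwise `ψ` would decrease linearly), which gives
`-u'/u ≥ δ₁`, so `u(r) e^{δ₁ r}` is nonincreasing.
-/

theorem HasDerivAt.div_of_logDeriv {n D : ℝ → ℝ} {n' ℓ x : ℝ} (hn : HasDerivAt n n' x)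
    (hD : HasDerivAt D (D x * ℓ) x) (hx : D x ≠ 0) :
    HasDerivAt (fun s => n s / D s) (n' / D x - n x / D x * ℓ) x :=
  (hn.div hD hx).congr_deriv (by field_simp)

theorem hasDerivAt_rpow_mul_rpow {u : ℝ → ℝ} {u' a b x : ℝ} (hx : 0 < x) (hu : HasDerivAt u u' x)
    (hux : 0 < u x) :
    HasDerivAt (fun s => s ^ a * u s ^ b) (x ^ a * u x ^ b * (a / x + b * (u' / u x))) x := by
  refine ((Real.hasDerivAt_rpow_const (Or.inl hx.ne')).mul
    (hu.rpow_const (Or.inl hux.ne'))).congr_deriv ?_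
  rw [Real.rpow_sub_one hx.ne', Real.rpow_sub_one hux.ne']
  field_simp

theorem nonneg_of_hasDerivAt_le_of_monotoneOn {ψ Φ : ℝ → ℝ} {a : ℝ}
    (hψ : ∀ x ∈ Ici a, ∃ d, HasDerivAt ψ d x ∧ d ≤ Φ (ψ x))
    (hψ0 : ∀ x ∈ Ici a, 0 ≤ ψ x) (hΦ : MonotoneOn Φ (Ici 0)) : ∀ x ∈ Ici a, 0 ≤ Φ (ψ x) := by
  have hψ' : ∀ x ∈ Ici a, HasDerivAt ψ (deriv ψ x) x ∧ deriv ψ x ≤ Φ (ψ x) := fun x hx => by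
    obtain ⟨d, hd, hle⟩ := hψ x hx
    rw [hd.deriv]
    exact ⟨hd, hle⟩
  intro r hr
  by_contra! hneg
  set ε := -Φ (ψ r)
  have hε : 0 < ε := neg_pos.2 hneg
  -- as long as `ψ ≤ ψ r`, `ψ` decreases with slope at most `-ε`, so it cannot stay nonnegative
  set b := r + 2 * (ψ r + 1) / ε
  have hrb : r ≤ b := le_add_of_nonneg_right (div_nonneg (by linarith [hψ0 r hr]) hε.le)
  have hfence : ∀ x ∈ Icc r b, ψ x ≤ ψ r - ε / 2 * (x - r) := by
    refine image_le_of_deriv_right_lt_deriv_boundary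
      (fun x hx => (hψ' x (mem_Ici.2 (hr.trans hx.1))).1.continuousAt.continuousWithinAt)
      (fun x hx => (hψ' x (mem_Ici.2 (hr.trans hx.1))).1.hasDerivWithinAt) (by simp)
      (fun x => ((hasDerivAt_id x).sub_const r).const_mul (ε / 2) |>.const_sub (ψ r)) ?_
    intro x hx hψx
    have hxa : x ∈ Ici a := mem_Ici.2 (hr.trans hx.1)
    have hle : ψ x ≤ ψ r := by
      rw [hψx]; linarith [mul_nonneg (half_pos hε).le (sub_nonneg.2 hx.1)]
    have := hΦ (hψ0 x hxa) (hψ0 r hr) hle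
    linarith [(hψ' x hxa).2]
  have := hfence b (right_mem_Icc.2 hrb)
  have hb : ε / 2 * (b - r) = ψ r + 1 := by simp only [b]; field_simp; ring
  linarith [hψ0 b (mem_Ici.2 (hr.trans hrb))]

theorem le_mul_exp_of_deriv_le_neg_mul {u u' : ℝ → ℝ} {δ R : ℝ}
    (hu : ∀ r ∈ Ici R, HasDerivAt u (u' r) r) (h : ∀ r ∈ Ici R, u' r ≤ -δ * u r) :
    ∀ r ∈ Ici R, u r ≤ u R * Real.exp (δ * R) * Real.exp (-δ * r) := by
  have hd : ∀ x ∈ Ici R, HasDerivAt (fun s => u s * Real.exp (δ * s))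
      ((u' x + δ * u x) * Real.exp (δ * x)) x := fun x hx =>
    ((hu x hx).mul ((hasDerivAt_id x).const_mul δ).exp).congr_deriv (by simp; ring)
  have hanti : AntitoneOn (fun s => u s * Real.exp (δ * s)) (Ici R) :=
    antitoneOn_of_hasDerivWithinAt_nonpos (convex_Ici R)
      (fun x hx => (hd x hx).continuousAt.continuousWithinAt)
      (fun x hx => (hd x (interior_subset hx)).hasDerivWithinAt)
      (fun x hx => mul_nonpos_of_nonpos_of_nonneg (by linarith [h x (interior_subset hx)])
        (Real.exp_pos _).le)
  intro r hr
  calc u r = u r * Real.exp (δ * r) * Real.exp (-δ * r) := by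
        rw [mul_assoc, ← Real.exp_add]; simp
    _ ≤ u R * Real.exp (δ * R) * Real.exp (-δ * r) :=
        mul_le_mul_of_nonneg_right (hanti self_mem_Ici hr hr) (Real.exp_pos _).le

theorem eventually_le_mul_rpow_of_abs_le_mul_rpow {f : ℝ → ℝ} {A p q t₀ c : ℝ} (hpq : p < q)
    (ht₀ : 0 < t₀) (hc : 0 < c) (hf : ∀ t : ℝ, |t| ≤ t₀ → |f t| ≤ A * |t| ^ (q - 1)) :
    ∀ᶠ t in 𝓝[>] 0, f t ≤ c * t ^ (p - 1) := by
  have hsmall : ∀ᶠ t in 𝓝 (0 : ℝ), |t| ≤ t₀ :=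
    (continuous_abs.tendsto' 0 0 abs_zero).eventually (eventually_le_nhds ht₀)
  have hcoef : ∀ᶠ t in 𝓝 (0 : ℝ), A * t ^ (q - p) < c := by
    have h := ((Real.continuousAt_rpow_const 0 (q - p) (Or.inr (sub_pos.2 hpq).le)).const_mul A)
    rw [ContinuousAt, Real.zero_rpow (sub_pos.2 hpq).ne', mul_zero] at h
    exact h.eventually (eventually_lt_nhds hc)
  filter_upwards [nhdsWithin_le_nhds hsmall, nhdsWithin_le_nhds hcoef, self_mem_nhdsWithin]
    with t ht hAt (htpos : 0 < t)
  have hsplit : t ^ (q - 1) = t ^ (q - p) * t ^ (p - 1) := by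
    rw [← Real.rpow_add htpos]; ring_nf
  calc f t ≤ A * t ^ (q - 1) :=
        (le_abs_self _).trans (by simpa only [abs_of_pos htpos] using hf t ht)
    _ = A * t ^ (q - p) * t ^ (p - 1) := by rw [hsplit, mul_assoc]
    _ ≤ c * t ^ (p - 1) := by gcongr

-- For radial `u`, `Δ_p u = r^{1-N} (pFlux N p u')'`.
noncomputable def pFlux (N p : ℝ) (v : ℝ → ℝ) (r : ℝ) : ℝ := r ^ (N - 1) * |v r| ^ (p - 2) * v r

section pFlux

variable {N p r : ℝ} {v : ℝ → ℝ}

theorem pFlux_nonneg (hr : 0 ≤ r) (hv : 0 ≤ v r) : 0 ≤ pFlux N p v r :=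
  mul_nonneg (mul_nonneg (Real.rpow_nonneg hr _) (Real.rpow_nonneg (abs_nonneg _) _)) hv

theorem pos_of_pFlux_pos (hr : 0 ≤ r) (h : 0 < pFlux N p v r) : 0 < v r := by
  by_contra! hv
  exact h.not_ge <| mul_nonpos_of_nonneg_of_nonpos
    (mul_nonneg (Real.rpow_nonneg hr _) (Real.rpow_nonneg (abs_nonneg _) _)) hv

theorem neg_pFlux_of_neg (hv : v r < 0) : -pFlux N p v r = r ^ (N - 1) * (-v r) ^ (p - 1) := by
  have hp : p - 1 = (p - 2) + 1 := by ring
  rw [pFlux, abs_of_neg hv, hp, Real.rpow_add_one (neg_pos.2 hv).ne']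
  ring

end pFlux

-- Equal to `(-u'/u)^{p-1}` where `u' < 0` (`riccati_eq`); as a quotient it is differentiable
-- although `u'` need not be.
noncomputable def riccati (N p : ℝ) (u u' : ℝ → ℝ) (r : ℝ) : ℝ :=
  -pFlux N p u' r / (r ^ (N - 1) * u r ^ (p - 1))

section riccati

variable {N p c r g' : ℝ} {u u' : ℝ → ℝ}

theorem riccati_eq (hr : 0 < r) (hu : 0 < u r) (hu' : u' r < 0) :
    riccati N p u u' r = (-u' r / u r) ^ (p - 1) := by
  rw [riccati, neg_pFlux_of_neg hu', mul_div_mul_left _ _ (Real.rpow_pos_of_pos hr _).ne',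
    Real.div_rpow (neg_nonneg.2 hu'.le) hu.le]

theorem riccati_nonneg (hr : 0 < r) (hu : 0 < u r) (hu' : u' r < 0) :
    0 ≤ riccati N p u u' r := by
  rw [riccati_eq hr hu hu']
  exact Real.rpow_nonneg (div_nonneg (neg_nonneg.2 hu'.le) hu.le) _

theorem riccati_rpow (hp : 1 < p) (hr : 0 < r) (hu : 0 < u r) (hu' : u' r < 0) :
    riccati N p u u' r ^ (p / (p - 1)) = (-u' r / u r) ^ p := by
  rw [riccati_eq hr hu hu', ← Real.rpow_mul (div_nonneg (neg_nonneg.2 hu'.le) hu.le),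
    mul_div_cancel₀ _ (sub_pos.2 hp).ne']

theorem hasDerivAt_riccati_le (hN : 1 ≤ N) (hp : 1 < p) (hr : 0 < r)
    (hu : HasDerivAt u (u' r) r) (hur : 0 < u r) (hu'r : u' r < 0)
    (hflux : HasDerivAt (pFlux N p u') g' r) (hsub : c * (r ^ (N - 1) * u r ^ (p - 1)) ≤ g') :
    ∃ d, HasDerivAt (riccati N p u u') d r ∧
      d ≤ (p - 1) * riccati N p u u' r ^ (p / (p - 1)) - c := by
  have hD : 0 < r ^ (N - 1) * u r ^ (p - 1) :=
    mul_pos (Real.rpow_pos_of_pos hr _) (Real.rpow_pos_of_pos hur _)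
  refine ⟨_, hflux.neg.div_of_logDeriv (hasDerivAt_rpow_mul_rpow hr hu hur) hD.ne', ?_⟩
  have hw : riccati N p u u' r * (u' r / u r) = -(-u' r / u r) ^ p := by
    rw [riccati_eq hr hur hu'r, Real.rpow_sub_one (div_pos (neg_pos.2 hu'r) hur).ne']
    field_simp [hu'r.ne]
  have hforce : -g' / (r ^ (N - 1) * u r ^ (p - 1)) ≤ -c := by
    rw [div_le_iff₀ hD]; linarith
  have hcurv : 0 ≤ riccati N p u u' r * ((N - 1) / r) :=
    mul_nonneg (riccati_nonneg hr hur hu'r) (div_nonneg (sub_nonneg.2 hN) hr.le)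
  rw [riccati_rpow hp hr hur hu'r]
  calc -g' / (r ^ (N - 1) * u r ^ (p - 1))
        - riccati N p u u' r * ((N - 1) / r + (p - 1) * (u' r / u r))
      = -g' / (r ^ (N - 1) * u r ^ (p - 1)) - riccati N p u u' r * ((N - 1) / r)
        - (p - 1) * (riccati N p u u' r * (u' r / u r)) := by ring
    _ ≤ (p - 1) * (-u' r / u r) ^ p - c := by rw [hw]; linarith

end riccati

section subsolution

variable {N p c R : ℝ} {u u' g' : ℝ → ℝ}

theorem neg_of_pFlux_strictMonoOn (hR : 0 ≤ R) (hu_pos : ∀ r ∈ Ici R, 0 < u r)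
    (hu' : ∀ r ∈ Ici R, HasDerivAt u (u' r) r) (hmono : StrictMonoOn (pFlux N p u') (Ici R))
    (hu0 : Tendsto u atTop (𝓝 0)) : ∀ r ∈ Ici R, u' r < 0 := by
  intro r hr
  by_contra! h
  have hRx : ∀ x ∈ Ici r, x ∈ Ici R := fun x hx => mem_Ici.2 (le_trans hr hx)
  have hpos : ∀ x ∈ Ioi r, 0 < u' x := fun x hx =>
    pos_of_pFlux_pos (hR.trans (hRx x (mem_Ici.2 hx.le)))
      ((pFlux_nonneg (hR.trans hr) h).trans_lt (hmono hr (hRx x (mem_Ici.2 hx.le)) hx))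
  have hmonoU : MonotoneOn u (Ici r) :=
    monotoneOn_of_hasDerivWithinAt_nonneg (convex_Ici r)
      (fun x hx => (hu' x (hRx x hx)).continuousAt.continuousWithinAt)
      (fun x hx => (hu' x (hRx x (interior_subset hx))).hasDerivWithinAt)
      (fun x hx => (hpos x (by rwa [interior_Ici] at hx)).le)
  have hlim : u r ≤ 0 :=
    ge_of_tendsto hu0 (eventually_atTop.2 ⟨r, fun x hx => hmonoU self_mem_Ici hx hx⟩)
  exact (hu_pos r hr).not_ge hlim

theorem deriv_le_neg_mul_of_subsolution (hN : 1 ≤ N) (hp : 1 < p) (hc : 0 < c) (hR : 0 < R)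
    (hu_pos : ∀ r ∈ Ici R, 0 < u r) (hu' : ∀ r ∈ Ici R, HasDerivAt u (u' r) r)
    (hflux : ∀ r ∈ Ici R, HasDerivAt (pFlux N p u') (g' r) r)
    (hsub : ∀ r ∈ Ici R, c * (r ^ (N - 1) * u r ^ (p - 1)) ≤ g' r)
    (hu0 : Tendsto u atTop (𝓝 0)) : ∀ r ∈ Ici R, u' r ≤ -(c / (p - 1)) ^ (1 / p) * u r := by
  have hr0 : ∀ r ∈ Ici R, 0 < r := fun r hr => hR.trans_le hr
  have hmono : StrictMonoOn (pFlux N p u') (Ici R) :=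
    strictMonoOn_of_hasDerivWithinAt_pos (convex_Ici R)
      (fun x hx => (hflux x hx).continuousAt.continuousWithinAt)
      (fun x hx => (hflux x (interior_subset hx)).hasDerivWithinAt)
      (fun x hx => (mul_pos hc (mul_pos (Real.rpow_pos_of_pos (hr0 x (interior_subset hx)) _)
        (Real.rpow_pos_of_pos (hu_pos x (interior_subset hx)) _))).trans_le
          (hsub x (interior_subset hx)))
  have hneg := neg_of_pFlux_strictMonoOn hR.le hu_pos hu' hmono hu0
  have hΦ : MonotoneOn (fun y => (p - 1) * y ^ (p / (p - 1)) - c) (Ici 0) := by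
    intro x hx y _ hxy
    dsimp only
    gcongr
  have hlow := nonneg_of_hasDerivAt_le_of_monotoneOn
    (fun r hr => hasDerivAt_riccati_le hN hp (hr0 r hr) (hu' r hr) (hu_pos r hr) (hneg r hr)
      (hflux r hr) (hsub r hr))
    (fun r hr => riccati_nonneg (hr0 r hr) (hu_pos r hr) (hneg r hr)) hΦ
  intro r hr
  have hw : 0 ≤ -u' r / u r := div_nonneg (neg_nonneg.2 (hneg r hr).le) (hu_pos r hr).le
  have hwp : c / (p - 1) ≤ (-u' r / u r) ^ p := by
    have := hlow r hr
    rw [riccati_rpow hp (hr0 r hr) (hu_pos r hr) (hneg r hr)] at this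
    rw [div_le_iff₀ (by linarith)]
    linarith
  have hδ := (Real.rpow_inv_le_iff_of_pos (by positivity) hw (by linarith)).2 hwp
  rw [← one_div, le_div_iff₀ (hu_pos r hr)] at hδ
  linarith

end subsolution

theorem eventually_radial_forcing_le {p μ m : ℝ} {f u : ℝ → ℝ} (hp : 0 < p) (hm : 0 < m)
    (hf : ∀ᶠ t in 𝓝[>] 0, f t ≤ m / 4 * t ^ (p - 1)) (hu_pos : ∀ r : ℝ, 0 < r → 0 < u r)
    (hu0 : Tendsto u atTop (𝓝 0)) :
    ∀ᶠ r in atTop, μ / r ^ p * u r ^ (p - 1) - m * u r ^ (p - 1) + f (u r)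
      ≤ -(m / 2) * u r ^ (p - 1) := by
  have hu0' : Tendsto u atTop (𝓝[>] 0) :=
    tendsto_nhdsWithin_iff.2 ⟨hu0, (eventually_gt_atTop 0).mono hu_pos⟩
  have hμ : ∀ᶠ r in atTop, μ / r ^ p ≤ m / 4 :=
    (tendsto_const_nhds.div_atTop (tendsto_rpow_atTop hp)).eventually
      (eventually_le_nhds (by positivity))
  filter_upwards [hu0'.eventually hf, hμ, eventually_gt_atTop 0] with r hfr hμr hr
  have := mul_le_mul_of_nonneg_right hμr (Real.rpow_nonneg (hu_pos r hr).le (p - 1))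
  linarith

theorem stmt_19_general
    (N : ℕ) (hN : 2 ≤ N) (p μ m : ℝ)
    (hp1 : 1 < p)
    (hm : 0 < m)
    (f : ℝ → ℝ)
    (hF0 : ∃ A > (0:ℝ), ∃ q > p, ∃ t₀ > (0:ℝ),
      ∀ t : ℝ, |t| ≤ t₀ → |f t| ≤ A * |t| ^ (q - 1))
    (u u' : ℝ → ℝ)
    (hu_pos : ∀ r : ℝ, 0 < r → 0 < u r)
    (hu' : ∀ r : ℝ, 0 < r → HasDerivAt u (u' r) r)
    (hS : ∀ r : ℝ, 0 < r →
      HasDerivAt (fun s : ℝ => s ^ ((N : ℝ) - 1) * |u' s| ^ (p - 2) * u' s)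
        (-(r ^ ((N : ℝ) - 1) *
          (μ / r ^ p * u r ^ (p - 1) - m * u r ^ (p - 1) + f (u r)))) r)
    (hu0 : Tendsto u atTop (𝓝 0)) :
    ∃ C : ℝ, 0 < C ∧ ∃ R : ℝ, 0 < R ∧
      ∀ r : ℝ, R ≤ r →
        u r ≤ C * Real.exp (-(m / (2 * (p - 1))) ^ ((1 : ℝ) / p) * r) := by
  obtain ⟨A, -, q, hq, t₀, ht₀, hfA⟩ := hF0
  have hN1 : (1 : ℝ) ≤ N := Nat.one_le_cast.2 (by omega)
  have hforcing := eventually_radial_forcing_le (μ := μ) (by linarith) hm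
    (eventually_le_mul_rpow_of_abs_le_mul_rpow hq ht₀ (by positivity) hfA) hu_pos hu0
  obtain ⟨R, hR⟩ := eventually_atTop.1 (hforcing.and (eventually_gt_atTop 0))
  have hR0 : 0 < R := (hR R le_rfl).2
  have hsub (r : ℝ) (hr : r ∈ Ici R) : m / 2 * (r ^ ((N : ℝ) - 1) * u r ^ (p - 1)) ≤
      -(r ^ ((N : ℝ) - 1) * (μ / r ^ p * u r ^ (p - 1) - m * u r ^ (p - 1) + f (u r))) := by
    have := mul_le_mul_of_nonneg_left (hR r hr).1 (Real.rpow_nonneg (hR r hr).2.le ((N : ℝ) - 1))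
    linarith
  have hdecay := deriv_le_neg_mul_of_subsolution hN1 hp1 (half_pos hm) hR0
    (fun r hr => hu_pos r (hR r hr).2) (fun r hr => hu' r (hR r hr).2)
    (fun r hr => hS r (hR r hr).2) hsub hu0
  rw [div_div] at hdecay
  exact ⟨_, mul_pos (hu_pos R hR0) (Real.exp_pos _), R, hR0,
    le_mul_exp_of_deriv_le_neg_mul (fun r hr => hu' r (hR r hr).2) hdecay⟩

theorem stmt_19
    (N : ℕ) (hN : 2 ≤ N) (p μ m : ℝ)
    (hp1 : 1 < p) (hpN : p < N)
    (hμ0 : 0 ≤ μ) (hμ : μ < (((N : ℝ) - p) / p) ^ p)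
    (hm : 0 < m)
    (f : ℝ → ℝ) (hf : Continuous f)
    (hF0 : ∃ A > (0:ℝ), ∃ q > p, ∃ t₀ > (0:ℝ),
      ∀ t : ℝ, |t| ≤ t₀ → |f t| ≤ A * |t| ^ (q - 1))
    (u u' : ℝ → ℝ)
    (hu_pos : ∀ r : ℝ, 0 < r → 0 < u r)
    (hu' : ∀ r : ℝ, 0 < r → HasDerivAt u (u' r) r)
    (hS : ∀ r : ℝ, 0 < r →
      HasDerivAt (fun s : ℝ => s ^ ((N : ℝ) - 1) * |u' s| ^ (p - 2) * u' s)
        (-(r ^ ((N : ℝ) - 1) *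
          (μ / r ^ p * u r ^ (p - 1) - m * u r ^ (p - 1) + f (u r)))) r)
    (hu0 : Tendsto u atTop (𝓝 0)) :
    ∃ C : ℝ, 0 < C ∧ ∃ R : ℝ, 0 < R ∧
      ∀ r : ℝ, R ≤ r →
        u r ≤ C * Real.exp (-(m / (2 * (p - 1))) ^ ((1 : ℝ) / p) * r) :=
  stmt_19_general N hN p μ m hp1 hm f hF0 u u' hu_pos hu' hS hu0
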